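/- arXiv:2503.22918 — 2 statements merged into one kernel-verified Lean document; each statement's English description precedes it below -/
import Mathlib

section
/- Let f : (0, r0) → ℝ be nonnegative and differentiable a.e., let ε ∈ (0,1), θ ≥ 0, C > 0, and suppose C_r := 1 + 2Cr² satisfies C_r ≤ 2 and f(r) ≤ C_r (1-ε) (r/2) f'(r) + C r⁴ θ for a.e. r ∈ (0, r0), with f absolutely continuous. Then there are constants C̄ > 0 and η = 2ε/(1-ε) > 0 such that for all 0 < t < s < r0: (C_s/s²)^{1/(1-ε)} f(s) - (C_t/t²)^{1/(1-ε)} f(t) ≥ -C̄ (s^{(2-4ε)/(1-ε)} - t^{(2-4ε)/(1-ε)}), provided ε < 1/2. -/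
open MeasureTheory Set

/-!
Write `w r = C_r / r² = r⁻² + 2C`, so `w' r = -2 / r³`, and `p = 1 / (1 - ε)`. Multiplying the
differential inequality by `2 p w^(p-1) / r³` turns it into `(w^p f)' ≥ -2pCθ w^(p-1) r`, and
`w ≤ 2 / r²` bounds the right side below by `-K r^(α-1)`, where `K = 2pCθ 2^(p-1)` and
`α = (2 - 4ε) / (1 - ε)`. Hence `w^p f + (K + 1) / α · r^α` has an a.e. nonnegative derivative;
since it is differentiable everywhere on `(0, r0)`, it is nondecreasing there.
-/

lemma le_of_hasDerivAt_of_ae_nonneg {Φ Φ' : ℝ → ℝ} {a b : ℝ} (hab : a ≤ b)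
    (hderiv : ∀ x ∈ Icc a b, HasDerivAt Φ (Φ' x) x)
    (hnonneg : ∀ᵐ x, x ∈ Ioo a b → 0 ≤ Φ' x) : Φ a ≤ Φ b := by
  -- `Φ'` need not be integrable, so integrate the a.e. vanishing lower bound `min Φ' 0` instead.
  have hmin : (fun x ↦ min (Φ' x) 0) =ᵐ[volume.restrict (Ioo a b)] 0 := by
    filter_upwards [ae_restrict_mem measurableSet_Ioo, ae_restrict_of_ae hnonneg] with x hx h
    exact min_eq_right (h hx)
  have hint : IntegrableOn (fun x ↦ min (Φ' x) 0) (Icc a b) := by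
    rw [integrableOn_Icc_iff_integrableOn_Ioo]
    exact (integrable_zero _ _ _).congr hmin.symm
  have hle := intervalIntegral.integral_le_sub_of_hasDeriv_right_of_le hab
    (fun x hx ↦ (hderiv x hx).continuousAt.continuousWithinAt)
    (fun x hx ↦ (hderiv x (Ioo_subset_Icc_self hx)).hasDerivWithinAt) hint
    (fun x _ ↦ min_le_left _ 0)
  rw [intervalIntegral.integral_of_le hab, ← Measure.restrict_congr_set Ioo_ae_eq_Ioc,
    integral_eq_zero_of_ae hmin] at hle
  linarith

lemma hasDerivAt_one_add_mul_sq_div_sq (C : ℝ) {r : ℝ} (hr : r ≠ 0) :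
    HasDerivAt (fun x ↦ (1 + 2 * C * x ^ 2) / x ^ 2) (-2 / r ^ 3) r := by
  have h : HasDerivAt (fun x ↦ (x ^ 2)⁻¹ + 2 * C) (-(2 * r) / (r ^ 2) ^ 2) r := by
    simpa using ((hasDerivAt_pow 2 r).inv (pow_ne_zero 2 hr)).add_const (2 * C)
  refine (h.congr_deriv (by field_simp)).congr_of_eventuallyEq ?_
  filter_upwards [isOpen_ne.mem_nhds hr] with x hx
  field_simp

lemma rpow_mul_le_of_le_div_sq {u c r q : ℝ} (hu : 0 ≤ u) (hr : 0 < r) (hq : 0 ≤ q)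
    (huc : u ≤ c / r ^ 2) : u ^ q * r ≤ c ^ q * r ^ (1 - 2 * q) := by
  have hc : 0 ≤ c := by simpa using (le_div_iff₀ (by positivity)).mp (hu.trans huc)
  calc u ^ q * r ≤ (c / r ^ 2) ^ q * r := by gcongr
    _ = c ^ q * r ^ (1 - 2 * q) := by
      rw [Real.div_rpow hc (by positivity), ← Real.rpow_natCast, ← Real.rpow_mul hr.le,
        Real.rpow_sub hr, Real.rpow_one]
      push_cast
      ring

lemma neg_le_deriv_rpow_mul_of_le {u r p ε C θ F F' : ℝ} (hu : 0 < u) (hr : 0 < r) (hp : 0 ≤ p)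
    (hpε : p * (1 - ε) = 1)
    (h : F ≤ u * r ^ 2 * (1 - ε) * (r / 2) * F' + C * r ^ 4 * θ) :
    -(2 * p * C * θ * (u ^ (p - 1) * r)) ≤ -2 / r ^ 3 * p * u ^ (p - 1) * F + u ^ p * F' := by
  have hup : u ^ p = u ^ (p - 1) * u := by
    rw [← Real.rpow_add_one hu.ne', sub_add_cancel]
  have hscale : 0 ≤ 2 * p * u ^ (p - 1) / r ^ 3 := by positivity
  have hscaled := mul_le_mul_of_nonneg_left h hscale
  have hrhs : 2 * p * u ^ (p - 1) / r ^ 3 * (u * r ^ 2 * (1 - ε) * (r / 2) * F' + C * r ^ 4 * θ)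
      = u ^ p * F' + 2 * p * C * θ * (u ^ (p - 1) * r) := by
    rw [hup]; field_simp; linear_combination (u * F') * hpε
  rw [hrhs] at hscaled
  have hlhs : -2 / r ^ 3 * p * u ^ (p - 1) * F = -(2 * p * u ^ (p - 1) / r ^ 3 * F) := by ring
  linarith

lemma neg_le_deriv_weight_rpow_mul {C θ ε p r F F' : ℝ} (hC : 0 ≤ C) (hθ : 0 ≤ θ) (hp : 1 ≤ p)
    (hpε : p * (1 - ε) = 1) (hr : 0 < r) (hCr : 1 + 2 * C * r ^ 2 ≤ 2)
    (h : F ≤ (1 + 2 * C * r ^ 2) * (1 - ε) * (r / 2) * F' + C * r ^ 4 * θ) :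
    -(2 * p * C * θ * 2 ^ (p - 1)) * r ^ (1 - 2 * (p - 1)) ≤
      -2 / r ^ 3 * p * ((1 + 2 * C * r ^ 2) / r ^ 2) ^ (p - 1) * F +
        ((1 + 2 * C * r ^ 2) / r ^ 2) ^ p * F' := by
  set u := (1 + 2 * C * r ^ 2) / r ^ 2
  have hu : 0 < u := by positivity
  have hur : 1 + 2 * C * r ^ 2 = u * r ^ 2 := by simp only [u]; field_simp
  rw [hur] at h
  have hderiv := neg_le_deriv_rpow_mul_of_le hu hr (by linarith) hpε h
  have hbound : u ^ (p - 1) * r ≤ 2 ^ (p - 1) * r ^ (1 - 2 * (p - 1)) :=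
    rpow_mul_le_of_le_div_sq hu.le hr (by linarith) (by simp only [u]; gcongr)
  have hcoef : 0 ≤ 2 * p * C * θ := by positivity
  nlinarith [mul_le_mul_of_nonneg_left hbound hcoef]

theorem stmt_4_general (r0 C θ ε : ℝ) (hC : 0 < C) (hθ : 0 ≤ θ)
    (hε : 0 < ε) (hε2 : ε < 1 / 2)
    (f : ℝ → ℝ)
    (hdiff : ∀ r ∈ Ioo 0 r0, DifferentiableAt ℝ f r)
    (hCr : ∀ r ∈ Ioo 0 r0, 1 + 2 * C * r ^ 2 ≤ 2)
    (hineq : ∀ᵐ r ∂(volume : Measure ℝ), r ∈ Ioo 0 r0 →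
      f r ≤ (1 + 2 * C * r ^ 2) * (1 - ε) * (r / 2) * deriv f r + C * r ^ 4 * θ) :
    ∃ Cbar : ℝ, 0 < Cbar ∧ ∀ t s : ℝ, 0 < t → t < s → s < r0 →
      (((1 + 2 * C * s ^ 2) / s ^ 2) ^ ((1 : ℝ) / (1 - ε))) * f s -
          (((1 + 2 * C * t ^ 2) / t ^ 2) ^ ((1 : ℝ) / (1 - ε))) * f t
        ≥ -Cbar * (s ^ ((2 - 4 * ε) / (1 - ε)) - t ^ ((2 - 4 * ε) / (1 - ε))) := by
  set p : ℝ := 1 / (1 - ε) with hp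
  set α : ℝ := (2 - 4 * ε) / (1 - ε) with hα
  set K : ℝ := 2 * p * C * θ * 2 ^ (p - 1)
  have h1ε : 0 < 1 - ε := by linarith
  have hα0 : 0 < α := div_pos (by linarith) h1ε
  have hαp : α - 1 = 1 - 2 * (p - 1) := by rw [hα, hp]; field_simp; ring
  have hp1 : 1 ≤ p := by rw [hp, le_div_iff₀ h1ε]; linarith
  have hpε : p * (1 - ε) = 1 := by rw [hp]; field_simp
  refine ⟨(K + 1) / α, by positivity, fun t s ht hts hs ↦ ?_⟩
  have hsub : Icc t s ⊆ Ioo 0 r0 := fun x hx ↦ ⟨ht.trans_le hx.1, hx.2.trans_lt hs⟩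
  have key := le_of_hasDerivAt_of_ae_nonneg
    (Φ := fun x ↦ ((1 + 2 * C * x ^ 2) / x ^ 2) ^ p * f x + (K + 1) / α * x ^ α)
    (Φ' := fun r ↦ -2 / r ^ 3 * p * ((1 + 2 * C * r ^ 2) / r ^ 2) ^ (p - 1) * f r +
      ((1 + 2 * C * r ^ 2) / r ^ 2) ^ p * deriv f r + (K + 1) / α * (α * r ^ (α - 1)))
    hts.le (fun r hr ↦ ?_) ?_
  · linarith
  · have hr0 : 0 < r := (hsub hr).1
    exact (((hasDerivAt_one_add_mul_sq_div_sq C hr0.ne').rpow_const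
      (Or.inl (by positivity))).mul (hdiff r (hsub hr)).hasDerivAt).add
      ((Real.hasDerivAt_rpow_const (Or.inl hr0.ne')).const_mul _)
  · filter_upwards [hineq] with r hr hrts
    have hr' := hsub (Ioo_subset_Icc_self hrts)
    have hlow := neg_le_deriv_weight_rpow_mul hC.le hθ hp1 hpε hr'.1 (hCr r hr') (hr hr')
    have hcorr : (K + 1) / α * (α * r ^ (α - 1)) = (K + 1) * r ^ (1 - 2 * (p - 1)) := by
      rw [hαp]; field_simp
    have hpos : 0 < r ^ (1 - 2 * (p - 1)) := Real.rpow_pos_of_pos hr'.1 _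
    linarith

theorem stmt_4 (r0 C θ ε : ℝ) (hr0 : 0 < r0) (hC : 0 < C) (hθ : 0 ≤ θ)
    (hε : 0 < ε) (hε2 : ε < 1 / 2)
    (f : ℝ → ℝ) (hf0 : ∀ r ∈ Ioo 0 r0, 0 ≤ f r)
    (hdiff : ∀ r ∈ Ioo 0 r0, DifferentiableAt ℝ f r)
    (hCr : ∀ r ∈ Ioo 0 r0, 1 + 2 * C * r ^ 2 ≤ 2)
    (hineq : ∀ᵐ r ∂(volume : Measure ℝ), r ∈ Ioo 0 r0 →
      f r ≤ (1 + 2 * C * r ^ 2) * (1 - ε) * (r / 2) * deriv f r + C * r ^ 4 * θ) :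
    ∃ Cbar : ℝ, 0 < Cbar ∧ ∀ t s : ℝ, 0 < t → t < s → s < r0 →
      (((1 + 2 * C * s ^ 2) / s ^ 2) ^ ((1 : ℝ) / (1 - ε))) * f s -
          (((1 + 2 * C * t ^ 2) / t ^ 2) ^ ((1 : ℝ) / (1 - ε))) * f t
        ≥ -Cbar * (s ^ ((2 - 4 * ε) / (1 - ε)) - t ^ ((2 - 4 * ε) / (1 - ε))) :=
  stmt_4_general r0 C θ ε hC hθ hε hε2 f hdiff hCr hineq
end

section
/- Let f : (0, r0) → [0, ∞) be increasing with distributional derivative Df, and suppose f(r) ≤ (r/2) C_r g(r) for a.e. r, where g(r) ≥ 0 and C_r ≥ 1. Then for 0 < t < s < r0, the quotient monotonicity estimate holds: f(s)/s² - f(t)/t² ≥ ∫_t^s [Df/r² - (2/r³) f(r) dr] in the sense that ∫_{(t,s]} r^{-2} dDf(r) - ∫_t^s 2 f(r)/r³ dr ≤ f(s)/s² - f(t)/t². -/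
/-!
Since `1 / r ^ 2 = 1 / s ^ 2 + ∫_r^s 2 / u ^ 3 du`, exchanging the order of integration gives
`∫_{(t,s]} r⁻² dDf = Df (t,s] / s ^ 2 + ∫_t^s (2 / u ^ 3) Df (t,u] du`. Bounding `Df (t,u]` by
`f u - f t` and integrating the constant `f t` against `2 / u ^ 3` explicitly yields the estimate.
-/

open MeasureTheory Set

theorem integral_Ioc_two_div_pow_three {r s : ℝ} (hr : 0 < r) (hrs : r ≤ s) :
    ∫ u in Ioc r s, 2 / u ^ 3 = 1 / r ^ 2 - 1 / s ^ 2 := by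
  have hne : ∀ u ∈ uIcc r s, u ≠ 0 := fun u hu =>
    (hr.trans_le (uIcc_of_le hrs ▸ hu).1).ne'
  have hderiv : ∀ u ∈ uIcc r s, HasDerivAt (fun u : ℝ => -(u ^ 2)⁻¹) (2 / u ^ 3) u := by
    intro u hu
    have hu0 := hne u hu
    refine ((hasDerivAt_pow 2 u).inv (pow_ne_zero 2 hu0)).neg.congr_deriv ?_
    field_simp
    ring
  rw [← intervalIntegral.integral_of_le hrs, intervalIntegral.integral_eq_sub_of_hasDerivAt hderiv]
  · ring
  · exact ContinuousOn.intervalIntegrable fun u hu =>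
      (continuousAt_const.div (continuousAt_pow u 3) (pow_ne_zero 3 (hne u hu))).continuousWithinAt

theorem continuousOn_two_div_pow_three {t : ℝ} (ht : 0 < t) :
    ContinuousOn (fun u : ℝ => 2 / u ^ 3) (Ici t) := fun u hu =>
  (continuousAt_const.div (continuousAt_pow u 3)
    (pow_ne_zero 3 (ht.trans_le hu).ne')).continuousWithinAt

theorem integrableOn_Ioc_two_div_pow_three {t s : ℝ} (ht : 0 < t) :
    IntegrableOn (fun u : ℝ => 2 / u ^ 3) (Ioc t s) :=
  ((continuousOn_two_div_pow_three ht).mono Icc_subset_Ici_self).integrableOn_compact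
    isCompact_Icc |>.mono_set Ioc_subset_Icc_self

theorem setIntegral_Ioc_setIntegral_Ioc_swap (μ : Measure ℝ) [IsLocallyFiniteMeasure μ]
    {h : ℝ → ℝ} {a b : ℝ} (hh : IntegrableOn h (Ioc a b)) :
    ∫ r in Ioc a b, (∫ u in Ioc r b, h u) ∂μ = ∫ u in Ioc a b, μ.real (Ioc a u) * h u := by
  have : IsFiniteMeasure (μ.restrict (Ioc a b)) :=
    isFiniteMeasure_restrict.2 measure_Ioc_lt_top.ne
  have hG : Integrable (Function.uncurry fun r u => (Ici r).indicator h u)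
      ((μ.restrict (Ioc a b)).prod (volume.restrict (Ioc a b))) :=
    (hh.comp_snd _).indicator (measurableSet_le measurable_fst measurable_snd)
  have inner_u : ∀ r ∈ Ioc a b, ∫ u in Ioc a b, (Ici r).indicator h u = ∫ u in Ioc r b, h u := by
    intro r hr
    have hIcc : Ici r ∩ Ioc a b = Icc r b := by
      ext u
      simp only [mem_inter_iff, mem_Ici, mem_Ioc, mem_Icc]
      exact ⟨fun hu => ⟨hu.1, hu.2.2⟩, fun hu => ⟨hu.1, hr.1.trans_le hu.1, hu.2⟩⟩
    rw [integral_indicator measurableSet_Ici, Measure.restrict_restrict measurableSet_Ici, hIcc,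
      integral_Icc_eq_integral_Ioc]
  have inner_r : ∀ u ∈ Ioc a b,
      ∫ r in Ioc a b, (Ici r).indicator h u ∂μ = μ.real (Ioc a u) * h u := by
    intro u hu
    have hind : (fun r => (Ici r).indicator h u) = (Iic u).indicator fun _ => h u := by
      ext r
      by_cases hru : r ≤ u <;> simp [hru]
    rw [hind, integral_indicator measurableSet_Iic, Measure.restrict_restrict measurableSet_Iic,
      Iic_inter_Ioc_of_le hu.2, setIntegral_const, smul_eq_mul]
  rw [setIntegral_congr_fun measurableSet_Ioc (fun r hr => (inner_u r hr).symm),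
    integral_integral_swap hG, setIntegral_congr_fun measurableSet_Ioc inner_r]

theorem setIntegral_Ioc_one_div_sq (μ : Measure ℝ) [IsLocallyFiniteMeasure μ] {t s : ℝ}
    (ht : 0 < t) :
    ∫ r in Ioc t s, 1 / r ^ 2 ∂μ
      = μ.real (Ioc t s) / s ^ 2 + ∫ u in Ioc t s, μ.real (Ioc t u) * (2 / u ^ 3) := by
  have hcont : ContinuousOn (fun r : ℝ => 1 / r ^ 2) (Icc t s) := fun r hr =>
    (continuousAt_const.div (continuousAt_pow r 2)
      (pow_ne_zero 2 (ht.trans_le hr.1).ne')).continuousWithinAt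
  have hint : IntegrableOn (fun r : ℝ => 1 / r ^ 2) (Ioc t s) μ :=
    (hcont.integrableOn_compact isCompact_Icc).mono_set Ioc_subset_Icc_self
  have hrepr : EqOn (fun r : ℝ => 1 / r ^ 2 - 1 / s ^ 2) (fun r => ∫ u in Ioc r s, 2 / u ^ 3)
      (Ioc t s) := fun r hr => (integral_Ioc_two_div_pow_three (ht.trans hr.1) hr.2).symm
  have hsub := integral_sub hint (integrableOn_const (C := 1 / s ^ 2) measure_Ioc_lt_top.ne)
  rw [setIntegral_congr_fun measurableSet_Ioc hrepr,
    setIntegral_Ioc_setIntegral_Ioc_swap μ (integrableOn_Ioc_two_div_pow_three ht),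
    setIntegral_const, smul_eq_mul] at hsub
  rw [hsub]
  ring

theorem setIntegral_Ioc_sub_const_mul_two_div_pow_three {f : ℝ → ℝ} {t s : ℝ} (ht : 0 < t)
    (hts : t ≤ s) (hf : IntegrableOn (fun u => f u * (2 / u ^ 3)) (Ioc t s)) :
    ∫ u in Ioc t s, (f u - f t) * (2 / u ^ 3)
      = (∫ u in Ioc t s, 2 * f u / u ^ 3) - f t * (1 / t ^ 2 - 1 / s ^ 2) := by
  simp_rw [sub_mul]
  rw [integral_sub hf ((integrableOn_Ioc_two_div_pow_three ht).const_mul (f t)),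
    integral_const_mul, integral_Ioc_two_div_pow_three ht hts]
  congr 1
  exact integral_congr_ae (.of_forall fun u => by ring)

theorem setIntegral_Ioc_one_div_sq_sub_le {μ : Measure ℝ} [IsLocallyFiniteMeasure μ]
    {f : ℝ → ℝ} {t s : ℝ} (ht : 0 < t) (hts : t < s) (hf : MonotoneOn f (Icc t s))
    (hμ : ∀ u ∈ Ioc t s, μ.real (Ioc t u) ≤ f u - f t) :
    (∫ r in Ioc t s, 1 / r ^ 2 ∂μ) - ∫ r in Ioc t s, 2 * f r / r ^ 3
      ≤ f s / s ^ 2 - f t / t ^ 2 := by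
  have hf_int : IntegrableOn (fun u => f u * (2 / u ^ 3)) (Ioc t s) :=
    (hf.integrableOn_isCompact isCompact_Icc).mul_continuousOn
      ((continuousOn_two_div_pow_three ht).mono Icc_subset_Ici_self) isCompact_Icc
      |>.mono_set Ioc_subset_Icc_self
  have hweight : ∀ u ∈ Ioc t s, 0 ≤ 2 / u ^ 3 := fun u hu =>
    div_nonneg zero_le_two (pow_nonneg (ht.trans hu.1).le 3)
  have hbound : ∫ u in Ioc t s, μ.real (Ioc t u) * (2 / u ^ 3)
      ≤ ∫ u in Ioc t s, (f u - f t) * (2 / u ^ 3) := by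
    refine integral_mono_of_nonneg ?_ ?_ ?_
    · exact (ae_restrict_iff' measurableSet_Ioc).2 <| .of_forall fun u hu =>
        mul_nonneg measureReal_nonneg (hweight u hu)
    · exact hf_int.sub ((integrableOn_Ioc_two_div_pow_three ht).const_mul (f t)) |>.congr
        (.of_forall fun u => (sub_mul ..).symm)
    · exact (ae_restrict_iff' measurableSet_Ioc).2 <| .of_forall fun u hu =>
        mul_le_mul_of_nonneg_right (hμ u hu) (hweight u hu)
  rw [setIntegral_Ioc_one_div_sq μ ht]
  calc _ ≤ (f s - f t) / s ^ 2 + (∫ u in Ioc t s, (f u - f t) * (2 / u ^ 3))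
        - ∫ u in Ioc t s, 2 * f u / u ^ 3 := by
        gcongr
        exact hμ s (right_mem_Ioc.2 hts)
    _ = f s / s ^ 2 - f t / t ^ 2 := by
        rw [setIntegral_Ioc_sub_const_mul_two_div_pow_three ht hts.le hf_int]
        ring

theorem stmt_11_general (r0 : ℝ) (f : ℝ → ℝ)
    (hmono : MonotoneOn f (Ioo 0 r0))
    (Df : Measure ℝ) [IsFiniteMeasure Df]
    (hDf : ∀ a b : ℝ, 0 < a → a < b → b < r0 → Df (Ioc a b) ≤ ENNReal.ofReal (f b - f a))
    (t s : ℝ) (ht : 0 < t) (hts : t < s) (hs : s < r0) :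
    (∫ r in Ioc t s, 1 / r ^ 2 ∂Df) - ∫ r in Ioc t s, 2 * f r / r ^ 3
      ≤ f s / s ^ 2 - f t / t ^ 2 := by
  have hmono' : MonotoneOn f (Icc t s) :=
    hmono.mono fun r hr => ⟨ht.trans_le hr.1, hr.2.trans_lt hs⟩
  refine setIntegral_Ioc_one_div_sq_sub_le ht hts hmono' fun u hu => ?_
  exact ENNReal.toReal_le_of_le_ofReal
    (sub_nonneg.2 (hmono' (left_mem_Icc.2 hts.le) (Ioc_subset_Icc_self hu) hu.1.le))
    (hDf t u ht hu.1 (hu.2.trans_lt hs))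

theorem stmt_11 (r0 : ℝ) (hr0 : 0 < r0) (f g Cr : ℝ → ℝ)
    (hmono : MonotoneOn f (Ioo 0 r0)) (hf0 : ∀ r ∈ Ioo 0 r0, 0 ≤ f r)
    (hCr : ∀ r ∈ Ioo 0 r0, 1 ≤ Cr r) (hg : ∀ r ∈ Ioo 0 r0, 0 ≤ g r)
    (hfg : ∀ᵐ r ∂(volume : Measure ℝ), r ∈ Ioo 0 r0 → f r ≤ (r / 2) * Cr r * g r)
    (Df : Measure ℝ) [IsFiniteMeasure Df]
    (hDf : ∀ a b : ℝ, 0 < a → a < b → b < r0 → Df (Ioc a b) ≤ ENNReal.ofReal (f b - f a))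
    (t s : ℝ) (ht : 0 < t) (hts : t < s) (hs : s < r0) :
    (∫ r in Ioc t s, 1 / r ^ 2 ∂Df) - ∫ r in Ioc t s, 2 * f r / r ^ 3
      ≤ f s / s ^ 2 - f t / t ^ 2 :=
  stmt_11_general r0 f hmono Df hDf t s ht hts hs
end
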